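/- Let f : Ω → ℂ be a nonvanishing scalar C¹ function on an open set Ω ⊆ ℝ³, and let ρ : Ω → ℝ be a harmonic function (Δρ = 0) such that ∇f × ∇ρ = 0 in Ω. Then the purely vectorial function F = (1/f)·Dρ satisfies DF + F·(Df/f) = 0, and G = f·Dρ satisfies DG − G·(Df/f) = 0. -/

import Mathlib

open Quaternion

noncomputable section

/-- Points of ℝ³. -/
abbrev P3 := EuclideanSpace ℝ (Fin 3)

/-- Partial derivative ∂ₖ of a complex-valued function on ℝ³. -/
def pd (k : Fin 3) (F : P3 → ℂ) : P3 → ℂ :=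
  fun p => fderiv ℝ F p (EuclideanSpace.single k 1)

/-- The Laplacian Δ = ∂₁² + ∂₂² + ∂₃². -/
def lap3 (F : P3 → ℂ) : P3 → ℂ := fun p => ∑ k : Fin 3, pd k (pd k F) p

/-- Embedding of a complex scalar as a quaternion. -/
def qC (z : ℂ) : ℍ[ℂ] := ⟨z, 0, 0, 0⟩

/-- The quaternionic imaginary units e₁, e₂, e₃. -/
def qe : Fin 3 → ℍ[ℂ] := ![⟨0,1,0,0⟩, ⟨0,0,1,0⟩, ⟨0,0,0,1⟩]

/-- The eₖ-components of a quaternion. -/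
def qcomp : Fin 3 → ℍ[ℂ] → ℂ := ![QuaternionAlgebra.imI, QuaternionAlgebra.imJ, QuaternionAlgebra.imK]

/-- Quaternionic conjugation C_H. -/
def CH (q : ℍ[ℂ]) : ℍ[ℂ] := ⟨q.re, -q.imI, -q.imJ, -q.imK⟩

/-- Componentwise partial derivative of a quaternion-valued function. -/
def pdq (k : Fin 3) (W : P3 → ℍ[ℂ]) : P3 → ℍ[ℂ] :=
  fun p => ⟨pd k (fun x => (W x).re) p, pd k (fun x => (W x).imI) p,
            pd k (fun x => (W x).imJ) p, pd k (fun x => (W x).imK) p⟩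

/-- The Dirac (Moisil–Theodorescu) operator D Q = Σₖ eₖ ∂ₖ Q. -/
def Dq (W : P3 → ℍ[ℂ]) : P3 → ℍ[ℂ] := fun p => ∑ k : Fin 3, qe k * pdq k W p

/-- The right Dirac operator Dᵣ Q = Σₖ (∂ₖ Q) eₖ. -/
def Drq (W : P3 → ℍ[ℂ]) : P3 → ℍ[ℂ] := fun p => ∑ k : Fin 3, pdq k W p * qe k

/-- Gradient of a scalar function viewed as a purely vectorial quaternion. -/
def gradq (F : P3 → ℂ) : P3 → ℍ[ℂ] := fun p => ⟨0, pd 0 F p, pd 1 F p, pd 2 F p⟩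

/-- Divergence of (the vector part of) a quaternion-valued function. -/
def divq (W : P3 → ℍ[ℂ]) : P3 → ℂ :=
  fun p => pd 0 (fun x => (W x).imI) p + pd 1 (fun x => (W x).imJ) p + pd 2 (fun x => (W x).imK) p

/-- Rotor (curl) of (the vector part of) a quaternion-valued function. -/
def rotq (W : P3 → ℍ[ℂ]) : P3 → ℍ[ℂ] :=
  fun p => ⟨0,
    pd 1 (fun x => (W x).imK) p - pd 2 (fun x => (W x).imJ) p,
    pd 2 (fun x => (W x).imI) p - pd 0 (fun x => (W x).imK) p,
    pd 0 (fun x => (W x).imJ) p - pd 1 (fun x => (W x).imI) p⟩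

/-- Cross product of the vector parts of two quaternions. -/
def crossq (u v : ℍ[ℂ]) : ℍ[ℂ] :=
  ⟨0, u.imJ * v.imK - u.imK * v.imJ, u.imK * v.imI - u.imI * v.imK, u.imI * v.imJ - u.imJ * v.imI⟩

/-- Bilinear scalar product of the vector parts of two quaternions. -/
def dotq (u v : ℍ[ℂ]) : ℂ := u.imI * v.imI + u.imJ * v.imJ + u.imK * v.imK

/-- `Cⁿ` smoothness of a quaternion-valued function on a set, componentwise. -/
def QContDiffOn (n : ℕ) (W : P3 → ℍ[ℂ]) (Ω : Set P3) : Prop :=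
  ContDiffOn ℝ n (fun p => (W p).re) Ω ∧ ContDiffOn ℝ n (fun p => (W p).imI) Ω ∧
  ContDiffOn ℝ n (fun p => (W p).imJ) Ω ∧ ContDiffOn ℝ n (fun p => (W p).imK) Ω

/-- The pure-quaternion Df/f built from a nonvanishing scalar function f. -/
def DfF (f : P3 → ℂ) : P3 → ℍ[ℂ] := fun p => (f p)⁻¹ • gradq f p

/-!
The Dirac operator obeys the Leibniz rule `D(g Q) = g DQ + ∇g Q` for a scalar `g`, and on
gradients `D∇u = -Δu + rot ∇u = -Δu` by symmetry of second derivatives. So for harmonic `ρ`,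
`D(f⁻¹∇ρ) = ∇(f⁻¹)∇ρ = -f⁻²∇f∇ρ` and `D(f∇ρ) = ∇f∇ρ`. For quaternions `uv - vu = 2 u × v`, so
`∇f × ∇ρ = 0` makes `∇f` and `∇ρ` commute, and then `F·(Df/f) = f⁻²∇ρ∇f` and
`G·(Df/f) = ∇ρ∇f` cancel these terms exactly.
-/

def QDifferentiableAt (W : P3 → ℍ[ℂ]) (p : P3) : Prop :=
  DifferentiableAt ℝ (fun x => (W x).re) p ∧ DifferentiableAt ℝ (fun x => (W x).imI) p ∧
  DifferentiableAt ℝ (fun x => (W x).imJ) p ∧ DifferentiableAt ℝ (fun x => (W x).imK) p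

-- `smul_mul_assoc` and `mul_smul_comm` do not fire here: the scalar action on `ℍ[R]` is not
-- reducibly the one coming from `Algebra R ℍ[R]`.
theorem Quaternion.smul_mul_assoc' {R : Type*} [CommRing R] (a : R) (u v : ℍ[R]) :
    (a • u) * v = a • (u * v) := by
  ext <;> simp

theorem Quaternion.mul_smul_comm' {R : Type*} [CommRing R] (a : R) (u v : ℍ[R]) :
    u * (a • v) = a • (u * v) := by
  ext <;> simp

section PartialDerivatives

variable {u v : P3 → ℂ} {p : P3}

theorem pd_const (k : Fin 3) (c : ℂ) : pd k (fun _ => c) = 0 := by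
  funext p; simp [pd]

theorem pd_mul (hu : DifferentiableAt ℝ u p) (hv : DifferentiableAt ℝ v p) (k : Fin 3) :
    pd k (fun x => u x * v x) p = u p * pd k v p + pd k u p * v p := by
  simp [pd, fderiv_fun_mul hu hv, mul_comm]

theorem pd_inv (hu : DifferentiableAt ℝ u p) (h0 : u p ≠ 0) (k : Fin 3) :
    pd k (fun x => (u x)⁻¹) p = -(u p)⁻¹ ^ 2 * pd k u p := by
  have hcomp := fderiv_comp (𝕜 := ℝ) p (differentiableAt_inv (𝕜 := ℝ) h0) hu
  simp only [pd]
  rw [show (fun x => (u x)⁻¹) = Inv.inv ∘ u from rfl, hcomp, fderiv_inv' h0]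
  simp [ContinuousLinearMap.mulLeftRight_apply]
  ring

theorem differentiableAt_pd (hu : ContDiffAt ℝ 2 u p) (k : Fin 3) :
    DifferentiableAt ℝ (pd k u) p :=
  ((hu.fderiv_right (m := 1) (by norm_num)).differentiableAt one_ne_zero).clm_apply
    (differentiableAt_const _)

theorem pd_pd_comm (hu : ContDiffAt ℝ 2 u p) (j k : Fin 3) :
    pd k (pd j u) p = pd j (pd k u) p := by
  have hd : DifferentiableAt ℝ (fderiv ℝ u) p :=
    (hu.fderiv_right (m := 1) (by norm_num)).differentiableAt one_ne_zero
  unfold pd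
  rw [fderiv_clm_apply hd (differentiableAt_const _),
    fderiv_clm_apply hd (differentiableAt_const _)]
  simpa using hu.isSymmSndFDerivAt (by simp) _ _

end PartialDerivatives

theorem commutator_eq_two_smul_crossq (u v : ℍ[ℂ]) :
    u * v - v * u = (2 : ℂ) • crossq u v := by
  ext <;> simp <;> simp [crossq] <;> ring

theorem mul_comm_of_crossq_eq_zero {u v : ℍ[ℂ]} (h : crossq u v = 0) : u * v = v * u := by
  rw [← sub_eq_zero, commutator_eq_two_smul_crossq, h, smul_zero]

section Dirac

variable {u g : P3 → ℂ} {W : P3 → ℍ[ℂ]} {p : P3}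

theorem gradq_eq_sum (u : P3 → ℂ) (p : P3) : gradq u p = ∑ k, pd k u p • qe k := by
  ext <;> simp [Fin.sum_univ_three] <;> simp [gradq, qe]

theorem gradq_inv (hu : DifferentiableAt ℝ u p) (h0 : u p ≠ 0) :
    gradq (fun x => (u x)⁻¹) p = -(u p)⁻¹ ^ 2 • gradq u p := by
  ext <;> simp <;> simp [gradq, pd_inv hu h0]

theorem pdq_smul (hg : DifferentiableAt ℝ g p) (hW : QDifferentiableAt W p) (k : Fin 3) :
    pdq k (fun x => g x • W x) p = g p • pdq k W p + pd k g p • W p := by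
  obtain ⟨hre, hI, hJ, hK⟩ := hW
  ext <;> simp <;> simp [pdq, pd_mul hg, hre, hI, hJ, hK]

theorem Dq_smul (hg : DifferentiableAt ℝ g p) (hW : QDifferentiableAt W p) :
    Dq (fun x => g x • W x) p = g p • Dq W p + gradq g p * W p := by
  simp only [Dq, pdq_smul hg hW, mul_add, Finset.sum_add_distrib, Finset.smul_sum, gradq_eq_sum,
    Finset.sum_mul, Quaternion.mul_smul_comm', Quaternion.smul_mul_assoc']

theorem Dq_eq_neg_divq_add_rotq (hW : ∀ x, (W x).re = 0) :
    Dq W p = qC (-divq W p) + rotq W p := by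
  have hre : (fun x => (W x).re) = fun _ => 0 := funext hW
  ext <;> simp [Dq, Fin.sum_univ_three] <;> simp [pdq, divq, rotq, qC, qe, hre, pd_const] <;> ring

theorem divq_gradq (u : P3 → ℂ) (p : P3) : divq (gradq u) p = lap3 u p := by
  simp [divq, gradq, lap3, Fin.sum_univ_three]

theorem rotq_gradq (hu : ContDiffAt ℝ 2 u p) : rotq (gradq u) p = 0 := by
  ext <;> simp [rotq, gradq, pd_pd_comm hu]

theorem Dq_gradq (hu : ContDiffAt ℝ 2 u p) : Dq (gradq u) p = qC (-lap3 u p) := by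
  rw [Dq_eq_neg_divq_add_rotq (fun _ => rfl), divq_gradq, rotq_gradq hu, add_zero]

theorem qDifferentiableAt_gradq (hu : ContDiffAt ℝ 2 u p) : QDifferentiableAt (gradq u) p :=
  ⟨differentiableAt_const _, differentiableAt_pd hu 0, differentiableAt_pd hu 1,
    differentiableAt_pd hu 2⟩

theorem Dq_smul_gradq_of_lap3_eq_zero (hg : DifferentiableAt ℝ g p) (hu : ContDiffAt ℝ 2 u p)
    (hlap : lap3 u p = 0) :
    Dq (fun x => g x • gradq u x) p = gradq g p * gradq u p := by
  rw [Dq_smul hg (qDifferentiableAt_gradq hu), Dq_gradq hu, hlap, neg_zero,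
    show qC 0 = 0 from rfl, smul_zero, zero_add]

end Dirac

/-- if ρ is harmonic and ∇f × ∇ρ = 0, then F = (1/f)Dρ solves
    DF + F·(Df/f) = 0 and G = fDρ solves DG − G·(Df/f) = 0. -/
theorem statement17 (Ω : Set P3) (hΩ : IsOpen Ω)
    (f : P3 → ℂ) (hf : ContDiffOn ℝ 1 f Ω) (hf0 : ∀ p ∈ Ω, f p ≠ 0)
    (ρ : P3 → ℝ) (hρ : ContDiffOn ℝ 2 ρ Ω)
    (hharm : ∀ p ∈ Ω, lap3 (fun x => (ρ x : ℂ)) p = 0)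
    (hpar : ∀ p ∈ Ω, crossq (gradq f p) (gradq (fun x => (ρ x : ℂ)) p) = 0) :
    ∀ p ∈ Ω,
      (Dq (fun x => (f x)⁻¹ • gradq (fun y => (ρ y : ℂ)) x) p
          + ((f p)⁻¹ • gradq (fun y => (ρ y : ℂ)) p) * DfF f p = 0) ∧
      (Dq (fun x => f x • gradq (fun y => (ρ y : ℂ)) x) p
          - (f p • gradq (fun y => (ρ y : ℂ)) p) * DfF f p = 0) := by
  intro p hp
  have hfd : DifferentiableAt ℝ f p :=
    (hf.contDiffAt (hΩ.mem_nhds hp)).differentiableAt one_ne_zero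
  have hρc : ContDiffAt ℝ 2 (fun x => (ρ x : ℂ)) p :=
    Complex.ofRealCLM.contDiff.contDiffAt.comp p (hρ.contDiffAt (hΩ.mem_nhds hp))
  have hcomm := mul_comm_of_crossq_eq_zero (hpar p hp)
  have hf0p := hf0 p hp
  constructor
  · rw [Dq_smul_gradq_of_lap3_eq_zero (hfd.fun_inv hf0p) hρc (hharm p hp), gradq_inv hfd hf0p,
      DfF, Quaternion.smul_mul_assoc', Quaternion.smul_mul_assoc', Quaternion.mul_smul_comm',
      hcomm, smul_smul]
    module
  · rw [Dq_smul_gradq_of_lap3_eq_zero hfd hρc (hharm p hp), DfF, Quaternion.smul_mul_assoc',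
      Quaternion.mul_smul_comm', hcomm, smul_smul, mul_inv_cancel₀ hf0p, one_smul, sub_self]
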